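/- arXiv:1310.3031 — 2 statements merged into one kernel-verified Lean document; each statement's English description precedes it below -/
import Mathlib

section
/- Let G be a finite simple connected graph with smallest degree d_min and largest degree d_max, Laplacian matrix L = Diag(d) − A with algebraic connectivity a(G) = λ₂(L) (second smallest Laplacian eigenvalue), and let G₀ be the complete weighted graph on the same vertices with edge weights ω₀(ij) = d_i d_j / vol G, with Laplacian L₀ = Diag(d) − d d^T/vol G and algebraic connectivity a(G₀). Then d_min − a(G) ≤ a(G₀) − a(G) ≤ m(G) ≤ d_max − a(G). -/
/-!
On vectors `x ⊥ 𝟙` the Rayleigh quotients satisfy `R_{L₀}(x) = R_M(x) + R_L(x)`, because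
`L₀ = M + L`, and `R_L ≥ 0`. Moreover `d_min ≤ R_{L₀}(x) ≤ d_max`: the upper bound is immediate
from `xᵀL₀x = ∑ dᵢxᵢ² - (dᵀx)²/vol G`, and for the lower bound one writes `dᵢ = d_min + eᵢ`,
so that `dᵀx = eᵀx` on `x ⊥ 𝟙`, and Cauchy–Schwarz gives `(eᵀx)² ≤ (∑ eᵢ)(∑ eᵢxᵢ²) ≤ vol G · ∑ eᵢxᵢ²`.
The three inequalities then follow by taking infima and suprema over `x ⊥ 𝟙`.
-/

open Matrix Finset

variable {n : ℕ}

/-- The real-valued degree of a vertex. -/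
noncomputable def degR (G : SimpleGraph (Fin n)) [DecidableRel G.Adj] (i : Fin n) : ℝ :=
  (G.degree i : ℝ)

/-- The volume of the graph: the sum of all degrees. -/
noncomputable def volG (G : SimpleGraph (Fin n)) [DecidableRel G.Adj] : ℝ :=
  ∑ i, degR G i

/-- The modularity matrix `M = A - d dᵀ / vol G`. -/
noncomputable def modM (G : SimpleGraph (Fin n)) [DecidableRel G.Adj] :
    Matrix (Fin n) (Fin n) ℝ :=
  G.adjMatrix ℝ - (volG G)⁻¹ • Matrix.vecMulVec (degR G) (degR G)

/-- The Laplacian `L₀ = Diag(d) - d dᵀ / vol G` of the complete weighted graph `G₀`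
with weights `ω₀(ij) = d_i d_j / vol G`. -/
noncomputable def lap0 (G : SimpleGraph (Fin n)) [DecidableRel G.Adj] :
    Matrix (Fin n) (Fin n) ℝ :=
  Matrix.diagonal (degR G) - (volG G)⁻¹ • Matrix.vecMulVec (degR G) (degR G)

/-- The minimum of the Rayleigh quotient `xᵀXx/xᵀx` over nonzero vectors `x ⊥ 𝟙`.
For a Laplacian matrix `L` this is the algebraic connectivity `a(G) = λ₂(L)`. -/
noncomputable def rayleighMin (X : Matrix (Fin n) (Fin n) ℝ) : ℝ :=
  sInf {r : ℝ | ∃ x : Fin n → ℝ, x ≠ 0 ∧ (∑ i, x i) = 0 ∧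
    r = (x ⬝ᵥ (X *ᵥ x)) / (x ⬝ᵥ x)}

/-- The algebraic modularity `m(G) = max { xᵀMx / xᵀx : x ≠ 0, xᵀ𝟙 = 0 }`. -/
noncomputable def algMod (G : SimpleGraph (Fin n)) [DecidableRel G.Adj] : ℝ :=
  sSup {r : ℝ | ∃ x : Fin n → ℝ, x ≠ 0 ∧ (∑ i, x i) = 0 ∧
    r = (x ⬝ᵥ (modM G *ᵥ x)) / (x ⬝ᵥ x)}

section Extremal

variable {α : Type*} {T : Set α} {f g h : α → ℝ}

lemma sInf_image_sub_sInf_image_le_sSup_image (hT : T.Nonempty)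
    (hfgh : ∀ x ∈ T, f x = g x + h x) (hf : BddBelow (f '' T)) (hg : BddAbove (g '' T)) :
    sInf (f '' T) - sInf (h '' T) ≤ sSup (g '' T) := by
  have key : sInf (f '' T) - sSup (g '' T) ≤ sInf (h '' T) := by
    refine le_csInf (hT.image h) ?_
    rintro _ ⟨x, hx, rfl⟩
    have hfx := csInf_le hf (Set.mem_image_of_mem f hx)
    have hgx := le_csSup hg (Set.mem_image_of_mem g hx)
    linarith [hfgh x hx]
  linarith

lemma sSup_image_le_sub_sInf_image {c : ℝ} (hT : T.Nonempty) (hgh : ∀ x ∈ T, g x + h x ≤ c)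
    (hh : BddBelow (h '' T)) : sSup (g '' T) ≤ c - sInf (h '' T) := by
  refine csSup_le (hT.image g) ?_
  rintro _ ⟨x, hx, rfl⟩
  linarith [hgh x hx, csInf_le hh (Set.mem_image_of_mem h hx)]

end Extremal

section Rayleigh

variable {ι : Type*} [Fintype ι]

noncomputable def rayleigh (X : Matrix ι ι ℝ) (x : ι → ℝ) : ℝ :=
  (x ⬝ᵥ (X *ᵥ x)) / (x ⬝ᵥ x)

def sumZeroNonzero (ι : Type*) [Fintype ι] : Set (ι → ℝ) :=
  {x | x ≠ 0 ∧ ∑ i, x i = 0}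

lemma rayleigh_add (X Y : Matrix ι ι ℝ) (x : ι → ℝ) :
    rayleigh (X + Y) x = rayleigh X x + rayleigh Y x := by
  rw [rayleigh, add_mulVec, dotProduct_add, add_div, rayleigh, rayleigh]

lemma Matrix.PosSemidef.rayleigh_nonneg {X : Matrix ι ι ℝ} (hX : X.PosSemidef) (x : ι → ℝ) :
    0 ≤ rayleigh X x :=
  div_nonneg (by simpa using hX.dotProduct_mulVec_nonneg x)
    (Fintype.sum_nonneg fun i => mul_self_nonneg (x i))

lemma dotProduct_self_pos {x : ι → ℝ} (hx : x ≠ 0) : 0 < x ⬝ᵥ x :=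
  (Fintype.sum_nonneg fun i => mul_self_nonneg (x i)).lt_of_ne'
    (dotProduct_self_eq_zero.not.mpr hx)

lemma le_rayleigh {X : Matrix ι ι ℝ} {x : ι → ℝ} {c : ℝ} (hx : x ≠ 0)
    (h : c * (x ⬝ᵥ x) ≤ x ⬝ᵥ (X *ᵥ x)) : c ≤ rayleigh X x :=
  (le_div_iff₀ (dotProduct_self_pos hx)).mpr h

lemma rayleigh_le {X : Matrix ι ι ℝ} {x : ι → ℝ} {c : ℝ} (hx : x ≠ 0)
    (h : x ⬝ᵥ (X *ᵥ x) ≤ c * (x ⬝ᵥ x)) : rayleigh X x ≤ c :=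
  (div_le_iff₀ (dotProduct_self_pos hx)).mpr h

lemma sumZeroNonzero_nonempty [Nontrivial ι] [DecidableEq ι] :
    (sumZeroNonzero ι).Nonempty := by
  obtain ⟨i, j, hij⟩ := exists_pair_ne ι
  refine ⟨Pi.single i 1 - Pi.single j 1, fun h => ?_, ?_⟩
  · simpa [hij] using congrFun h i
  · simp [Finset.sum_sub_distrib]

lemma sumZeroNonzero_eq_empty [Subsingleton ι] : sumZeroNonzero ι = ∅ := by
  refine Set.eq_empty_of_forall_notMem fun x ⟨hx, hs⟩ => hx (funext fun i => ?_)
  rw [← Fintype.sum_subsingleton x i, hs, Pi.zero_apply]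

end Rayleigh

lemma rayleighMin_eq_sInf_image (X : Matrix (Fin n) (Fin n) ℝ) :
    rayleighMin X = sInf (rayleigh X '' sumZeroNonzero (Fin n)) := by
  simp only [rayleighMin, rayleigh, sumZeroNonzero, Set.image, Set.mem_ofPred_eq, and_assoc,
    eq_comm]

lemma algMod_eq_sSup_image (G : SimpleGraph (Fin n)) [DecidableRel G.Adj] :
    algMod G = sSup (rayleigh (modM G) '' sumZeroNonzero (Fin n)) := by
  simp only [algMod, rayleigh, sumZeroNonzero, Set.image, Set.mem_ofPred_eq, and_assoc, eq_comm]

section ChungLu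

variable {ι : Type*} [Fintype ι] [DecidableEq ι] (d : ι → ℝ)

noncomputable def chungLuLap : Matrix ι ι ℝ :=
  diagonal d - (∑ i, d i)⁻¹ • vecMulVec d d

lemma dotProduct_chungLuLap_mulVec (x : ι → ℝ) :
    x ⬝ᵥ (chungLuLap d *ᵥ x) = ∑ i, d i * x i ^ 2 - (d ⬝ᵥ x) ^ 2 / ∑ i, d i := by
  rw [chungLuLap, sub_mulVec, dotProduct_sub, smul_mulVec, dotProduct_smul, vecMulVec_mulVec,
    dotProduct_smul]
  have hdiag : x ⬝ᵥ (diagonal d *ᵥ x) = ∑ i, d i * x i ^ 2 :=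
    Finset.sum_congr rfl fun i _ => by rw [mulVec_diagonal]; ring
  rw [hdiag, dotProduct_comm x d, MulOpposite.smul_eq_mul_unop, MulOpposite.unop_op, smul_eq_mul,
    div_eq_inv_mul, sq]

lemma dotProduct_chungLuLap_mulVec_le (hd : 0 ≤ ∑ i, d i) (x : ι → ℝ) :
    x ⬝ᵥ (chungLuLap d *ᵥ x) ≤ sSup (Set.range d) * (x ⬝ᵥ x) := by
  have hmax : ∑ i, d i * x i ^ 2 ≤ sSup (Set.range d) * (x ⬝ᵥ x) := by
    rw [dotProduct, Finset.mul_sum]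
    refine Finset.sum_le_sum fun i _ => ?_
    rw [← sq, mul_comm _ (x i ^ 2), mul_comm _ (x i ^ 2)]
    exact mul_le_mul_of_nonneg_left
      (le_csSup (Set.finite_range d).bddAbove (Set.mem_range_self i)) (sq_nonneg _)
  rw [dotProduct_chungLuLap_mulVec]
  linarith [div_nonneg (sq_nonneg (d ⬝ᵥ x)) hd]

lemma sInf_range_mul_le_dotProduct_chungLuLap_mulVec (hd : 0 ≤ d) {x : ι → ℝ}
    (hx : ∑ i, x i = 0) :
    sInf (Set.range d) * (x ⬝ᵥ x) ≤ x ⬝ᵥ (chungLuLap d *ᵥ x) := by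
  set δ := sInf (Set.range d)
  set e : ι → ℝ := fun i => d i - δ
  have hδ : 0 ≤ δ := Real.sInf_nonneg (Set.forall_mem_range.2 hd)
  have he : ∀ i, 0 ≤ e i := fun i =>
    sub_nonneg.2 (csInf_le (Set.finite_range d).bddBelow (Set.mem_range_self i))
  have hdx : d ⬝ᵥ x = ∑ i, e i * x i := by
    simp only [e, dotProduct, sub_mul, Finset.sum_sub_distrib, ← Finset.mul_sum, hx, mul_zero,
      sub_zero]
  have hdxx : ∑ i, d i * x i ^ 2 = δ * (x ⬝ᵥ x) + ∑ i, e i * x i ^ 2 := by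
    simp only [e, dotProduct, Finset.mul_sum, ← Finset.sum_add_distrib]
    exact Finset.sum_congr rfl fun i _ => by ring
  have hcs : (∑ i, e i * x i) ^ 2 ≤ (∑ i, e i) * ∑ i, e i * x i ^ 2 :=
    Finset.sum_sq_le_sum_mul_sum_of_sq_le_mul _ (fun i _ => he i)
      (fun i _ => mul_nonneg (he i) (sq_nonneg _)) (fun i _ => le_of_eq (by ring))
  have hsum : ∑ i, e i ≤ ∑ i, d i :=
    Finset.sum_le_sum fun i _ => sub_le_self _ hδ
  have hvar : (d ⬝ᵥ x) ^ 2 / ∑ i, d i ≤ ∑ i, e i * x i ^ 2 := by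
    refine div_le_of_le_mul₀ (Finset.sum_nonneg fun i _ => hd i)
      (Finset.sum_nonneg fun i _ => mul_nonneg (he i) (sq_nonneg _)) ?_
    rw [hdx, mul_comm]
    exact hcs.trans (mul_le_mul_of_nonneg_right hsum
      (Finset.sum_nonneg fun i _ => mul_nonneg (he i) (sq_nonneg _)))
  rw [dotProduct_chungLuLap_mulVec]
  linarith

end ChungLu

section Graph

variable (G : SimpleGraph (Fin n)) [DecidableRel G.Adj]

lemma degR_nonneg : 0 ≤ degR G := fun _ => Nat.cast_nonneg _

lemma lap0_eq_chungLuLap : lap0 G = chungLuLap (degR G) := rfl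

lemma lap0_eq_modM_add_lapMatrix : lap0 G = modM G + G.lapMatrix ℝ := by
  unfold lap0 modM SimpleGraph.lapMatrix SimpleGraph.degMatrix degR
  abel

lemma rayleigh_lap0 (x : Fin n → ℝ) :
    rayleigh (lap0 G) x = rayleigh (modM G) x + rayleigh (G.lapMatrix ℝ) x := by
  rw [lap0_eq_modM_add_lapMatrix, rayleigh_add]

lemma sInf_range_degR_le_rayleigh_lap0 {x : Fin n → ℝ} (hx : x ∈ sumZeroNonzero (Fin n)) :
    sInf (Set.range (degR G)) ≤ rayleigh (lap0 G) x := by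
  rw [lap0_eq_chungLuLap]
  exact le_rayleigh hx.1 (sInf_range_mul_le_dotProduct_chungLuLap_mulVec _ (degR_nonneg G) hx.2)

lemma rayleigh_lap0_le_sSup_range_degR {x : Fin n → ℝ} (hx : x ≠ 0) :
    rayleigh (lap0 G) x ≤ sSup (Set.range (degR G)) := by
  rw [lap0_eq_chungLuLap]
  exact rayleigh_le hx (dotProduct_chungLuLap_mulVec_le _
    (Finset.sum_nonneg fun i _ => degR_nonneg G i) x)

end Graph

theorem algMod_between_general (G : SimpleGraph (Fin n)) [DecidableRel G.Adj] :
    sInf (Set.range (degR G)) - rayleighMin (G.lapMatrix ℝ) ≤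
        rayleighMin (lap0 G) - rayleighMin (G.lapMatrix ℝ) ∧
    rayleighMin (lap0 G) - rayleighMin (G.lapMatrix ℝ) ≤ algMod G ∧
    algMod G ≤ sSup (Set.range (degR G)) - rayleighMin (G.lapMatrix ℝ) := by
  rw [rayleighMin_eq_sInf_image, rayleighMin_eq_sInf_image, algMod_eq_sSup_image]
  set T := sumZeroNonzero (Fin n)
  have hΔ : 0 ≤ sSup (Set.range (degR G)) :=
    Real.sSup_nonneg (Set.forall_mem_range.2 (degR_nonneg G))
  rcases subsingleton_or_nontrivial (Fin n) with _ | _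
  · -- no admissible vectors: every infimum and supremum below is the junk value `0`
    have hδ : sInf (Set.range (degR G)) ≤ 0 :=
      Real.sInf_nonpos (Set.forall_mem_range.2 fun _ => by simp [degR])
    simp only [T, sumZeroNonzero_eq_empty, Set.image_empty, Real.sInf_empty, Real.sSup_empty]
    refine ⟨?_, ?_, ?_⟩ <;> linarith
  · have hT : T.Nonempty := sumZeroNonzero_nonempty
    have hL : ∀ x, 0 ≤ rayleigh (G.lapMatrix ℝ) x :=
      (SimpleGraph.posSemidef_lapMatrix ℝ G).rayleigh_nonneg
    have hM : ∀ x ∈ T, rayleigh (modM G) x + rayleigh (G.lapMatrix ℝ) x ≤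
        sSup (Set.range (degR G)) := fun x hx =>
      rayleigh_lap0 G x ▸ rayleigh_lap0_le_sSup_range_degR G hx.1
    refine ⟨sub_le_sub_right (le_csInf (hT.image _) ?_) _, ?_, ?_⟩
    · exact Set.forall_mem_image.2 fun x hx => sInf_range_degR_le_rayleigh_lap0 G hx
    · refine sInf_image_sub_sInf_image_le_sSup_image hT (fun x _ => rayleigh_lap0 G x)
        ⟨_, Set.forall_mem_image.2 fun x hx => sInf_range_degR_le_rayleigh_lap0 G hx⟩
        ⟨sSup (Set.range (degR G)), Set.forall_mem_image.2 fun x hx => ?_⟩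
      linarith [hM x hx, hL x]
    · exact sSup_image_le_sub_sInf_image hT hM ⟨0, Set.forall_mem_image.2 fun x _ => hL x⟩

/-- `d_min - a(G) ≤ a(G₀) - a(G) ≤ m(G) ≤ d_max - a(G)`, where `a(G)` and `a(G₀)`
are the algebraic connectivities of `G` and of the Chung-Lu "average graph" `G₀`,
and `d_min`, `d_max` are the smallest and largest degrees of `G`. -/
theorem algMod_between (G : SimpleGraph (Fin n)) [DecidableRel G.Adj]
    (hG : G.Connected) :
    sInf (Set.range (degR G)) - rayleighMin (G.lapMatrix ℝ) ≤
        rayleighMin (lap0 G) - rayleighMin (G.lapMatrix ℝ) ∧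
    rayleighMin (lap0 G) - rayleighMin (G.lapMatrix ℝ) ≤ algMod G ∧
    algMod G ≤ sSup (Set.range (degR G)) - rayleighMin (G.lapMatrix ℝ) :=
  algMod_between_general G
end

section
/- Let M be the modularity matrix of a finite simple connected graph G, let λ be an eigenvalue of M with associated eigenvector u oriented so that d^T u ≥ 0, and suppose u has at least two entries of opposite signs. Let ℓ and ℓ' be the numbers of eigenvalues of M, counted with multiplicity, that are ≥ λ and > λ respectively. Then u induces at most ℓ+1 positive strong nodal domains and at most ℓ'+1 positive weak nodal domains on G. -/
open Matrix Finset

variable {n : ℕ}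

/-- `S` is a positive strong nodal domain of `G` induced by `u`: a maximal
connected subset of `{i : u i > 0}`. -/
def IsPosStrongNodalDomain (G : SimpleGraph (Fin n)) (u : Fin n → ℝ)
    (S : Set (Fin n)) : Prop :=
  S ⊆ {i | 0 < u i} ∧ (G.induce S).Connected ∧
    ∀ T : Set (Fin n), S ⊆ T → T ⊆ {i | 0 < u i} → (G.induce T).Connected → T = S

/-- `S` is a positive weak nodal domain of `G` induced by `u`: a maximal
connected subset of `{i : u i ≥ 0}` containing a vertex where `u` is nonzero. -/
def IsPosWeakNodalDomain (G : SimpleGraph (Fin n)) (u : Fin n → ℝ)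
    (S : Set (Fin n)) : Prop :=
  S ⊆ {i | 0 ≤ u i} ∧ (∃ i ∈ S, u i ≠ 0) ∧ (G.induce S).Connected ∧
    ∀ T : Set (Fin n), S ⊆ T → T ⊆ {i | 0 ≤ u i} → (G.induce T).Connected → T = S

/-!
Suppose `u` has more positive nodal domains `S` than the bound allows. The restrictions `u_S` of
`u` to the domains are then too many to avoid a nonzero combination `x = ∑ c_S u_S` orthogonal to
`d` and to every eigenvector of `M` with eigenvalue `≥ λ` (strong case) or `> λ` (weak case), so
`xᵀAx = xᵀMx < λ‖x‖²`, resp. `≤`. Distinct domains are disjoint and non-adjacent, hence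
`xᵀAx - λ‖x‖² = ∑ c_S² (u_Sᵀ A u_S - λ‖u_S‖²)`, and every summand is nonnegative: `u ≤ 0` on the
neighbours of `S` outside `S`, so `u_Sᵀ A u_S ≥ u_Sᵀ A u = λ‖u_S‖² + (dᵀu)(dᵀu_S) / vol G`.
This already contradicts the strict inequality. In the weak case equality is forced: `x` is a
`λ`-eigenvector of `A`, and a domain `S` with `c_S ≠ 0` has no edge from a positive vertex to the
negative vertices around it. A vertex `i ∈ S` next to such a negative vertex thus has `u_i = 0`,
and then `(Au)_i ≥ 0` forces `(A u_S)_i > 0`, while `(Ax)_i = c_S (A u_S)_i` must equal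
`λ x_i = 0`. By connectedness such a vertex exists, since `u` takes a negative value.
-/

namespace Matrix.IsHermitian

variable {ι : Type*} [Fintype ι] [DecidableEq ι] {M : Matrix ι ι ℝ}

lemma eq_sum_dotProduct_eigenvectorBasis_smul (hM : M.IsHermitian) (x : ι → ℝ) :
    x = ∑ i, (⇑(hM.eigenvectorBasis i) ⬝ᵥ x) • ⇑(hM.eigenvectorBasis i) := by
  have h := congrArg WithLp.ofLp (hM.eigenvectorBasis.sum_repr' (WithLp.toLp 2 x))
  simpa [PiLp.inner_apply, dotProduct, mul_comm] using h.symm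

lemma mulVec_eq_sum_eigenvalues_smul (hM : M.IsHermitian) (x : ι → ℝ) :
    M *ᵥ x = ∑ i, (hM.eigenvalues i * (⇑(hM.eigenvectorBasis i) ⬝ᵥ x)) •
      ⇑(hM.eigenvectorBasis i) := by
  conv_lhs => rw [hM.eq_sum_dotProduct_eigenvectorBasis_smul x]
  simp only [mulVec_sum, mulVec_smul, mulVec_eigenvectorBasis, smul_smul, mul_comm]

lemma mul_dotProduct_self_sub_dotProduct_mulVec (hM : M.IsHermitian) (lam : ℝ) (x : ι → ℝ) :
    lam * (x ⬝ᵥ x) - x ⬝ᵥ (M *ᵥ x) =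
      ∑ i, (lam - hM.eigenvalues i) * (⇑(hM.eigenvectorBasis i) ⬝ᵥ x) ^ 2 := by
  have hxx : x ⬝ᵥ x = ∑ i, (⇑(hM.eigenvectorBasis i) ⬝ᵥ x) ^ 2 := by
    conv_lhs => arg 2; rw [hM.eq_sum_dotProduct_eigenvectorBasis_smul x]
    refine (dotProduct_sum _ _ _).trans (sum_congr rfl fun i _ => ?_)
    rw [dotProduct_smul, smul_eq_mul, dotProduct_comm x, sq]
  have hxMx : x ⬝ᵥ (M *ᵥ x) =
      ∑ i, hM.eigenvalues i * (⇑(hM.eigenvectorBasis i) ⬝ᵥ x) ^ 2 := by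
    rw [hM.mulVec_eq_sum_eigenvalues_smul, dotProduct_sum]
    refine sum_congr rfl fun i _ => ?_
    rw [dotProduct_smul, smul_eq_mul, dotProduct_comm x, sq, mul_assoc]
  rw [hxx, hxMx, mul_sum, ← sum_sub_distrib]
  exact sum_congr rfl fun i _ => by ring

lemma sub_eigenvalues_mul_sq_nonneg (hM : M.IsHermitian) {lam : ℝ} {x : ι → ℝ}
    (hx : ∀ i, lam < hM.eigenvalues i → ⇑(hM.eigenvectorBasis i) ⬝ᵥ x = 0) (i : ι) :
    0 ≤ (lam - hM.eigenvalues i) * (⇑(hM.eigenvectorBasis i) ⬝ᵥ x) ^ 2 := by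
  by_cases hi : lam < hM.eigenvalues i
  · simp [hx i hi]
  · exact mul_nonneg (by linarith) (sq_nonneg _)

lemma dotProduct_mulVec_le_of_orthogonal (hM : M.IsHermitian) {lam : ℝ} {x : ι → ℝ}
    (hx : ∀ i, lam < hM.eigenvalues i → ⇑(hM.eigenvectorBasis i) ⬝ᵥ x = 0) :
    x ⬝ᵥ (M *ᵥ x) ≤ lam * (x ⬝ᵥ x) := by
  have := hM.mul_dotProduct_self_sub_dotProduct_mulVec lam x
  have := sum_nonneg fun i (_ : i ∈ univ) => hM.sub_eigenvalues_mul_sq_nonneg hx i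
  linarith

lemma dotProduct_mulVec_lt_of_orthogonal (hM : M.IsHermitian) {lam : ℝ} {x : ι → ℝ}
    (hx0 : x ≠ 0) (hx : ∀ i, lam ≤ hM.eigenvalues i → ⇑(hM.eigenvectorBasis i) ⬝ᵥ x = 0) :
    x ⬝ᵥ (M *ᵥ x) < lam * (x ⬝ᵥ x) := by
  obtain ⟨i, hi⟩ : ∃ i, ⇑(hM.eigenvectorBasis i) ⬝ᵥ x ≠ 0 := by
    by_contra! h
    exact hx0 (by rw [hM.eq_sum_dotProduct_eigenvectorBasis_smul x]; simp [h])
  have hlam : hM.eigenvalues i < lam := lt_of_not_ge fun h => hi (hx i h)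
  have := hM.mul_dotProduct_self_sub_dotProduct_mulVec lam x
  have := sum_pos' (fun j (_ : j ∈ univ) =>
      hM.sub_eigenvalues_mul_sq_nonneg (fun j h => hx j h.le) j)
    ⟨i, mem_univ i, mul_pos (sub_pos.2 hlam) (by positivity)⟩
  linarith

lemma mulVec_eq_smul_of_orthogonal_of_dotProduct_mulVec_eq (hM : M.IsHermitian) {lam : ℝ}
    {x : ι → ℝ} (hx : ∀ i, lam < hM.eigenvalues i → ⇑(hM.eigenvectorBasis i) ⬝ᵥ x = 0)
    (heq : x ⬝ᵥ (M *ᵥ x) = lam * (x ⬝ᵥ x)) :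
    M *ᵥ x = lam • x := by
  have hzero := hM.mul_dotProduct_self_sub_dotProduct_mulVec lam x
  rw [heq, sub_self, eq_comm,
    sum_eq_zero_iff_of_nonneg fun i _ => hM.sub_eigenvalues_mul_sq_nonneg hx i] at hzero
  conv_rhs => rw [hM.eq_sum_dotProduct_eigenvectorBasis_smul x, smul_sum]
  rw [hM.mulVec_eq_sum_eigenvalues_smul]
  refine sum_congr rfl fun i _ => ?_
  rw [smul_smul]
  rcases mul_eq_zero.1 (hzero i (mem_univ i)) with h | h
  · rw [sub_eq_zero.1 h]
  · rw [pow_eq_zero_iff two_ne_zero |>.1 h, mul_zero, mul_zero]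

end Matrix.IsHermitian

lemma exists_ne_zero_dotProduct_sum_smul_eq_zero {K ι κ m : Type*} [Field K] [Fintype ι]
    [Fintype m] (d : m → K) (w : κ → m → K) (F : Finset κ) (v : ι → m → K)
    (hcard : #F + 1 < Fintype.card ι) :
    ∃ c : ι → K, c ≠ 0 ∧ d ⬝ᵥ ∑ a, c a • v a = 0 ∧ ∀ k ∈ F, w k ⬝ᵥ ∑ a, c a • v a = 0 := by
  let B : Matrix (Option F) ι K := of fun o a => o.elim d (fun k => w k) ⬝ᵥ v a
  have hker : LinearMap.ker B.mulVecLin ≠ ⊥ :=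
    LinearMap.ker_ne_bot_of_finrank_lt (by simpa using hcard)
  obtain ⟨c, hc, hc0⟩ := (Submodule.ne_bot_iff _).1 hker
  have hBc (o : Option F) : o.elim d (fun k => w k) ⬝ᵥ ∑ a, c a • v a = 0 := by
    have := congrFun (LinearMap.mem_ker.1 hc) o
    rw [dotProduct_sum]
    simp only [dotProduct_smul, smul_eq_mul]
    simpa [B, mulVec, dotProduct, mul_comm] using this
  exact ⟨c, hc0, hBc none, fun k hk => hBc (some ⟨k, hk⟩)⟩

def rayleighExcess {m : Type*} [Fintype m] (A : Matrix m m ℝ) (lam : ℝ) (v : m → ℝ) : ℝ :=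
  v ⬝ᵥ (A *ᵥ v) - lam * (v ⬝ᵥ v)

lemma sum_smul_dotProduct_mulVec_sum_smul {R ι m : Type*} [CommSemiring R] [Fintype ι]
    [Fintype m] (A : Matrix m m R) (c : ι → R) (v : ι → m → R)
    (h : Pairwise fun a b => v a ⬝ᵥ (A *ᵥ v b) = 0) :
    (∑ a, c a • v a) ⬝ᵥ (A *ᵥ ∑ a, c a • v a) = ∑ a, c a ^ 2 * (v a ⬝ᵥ (A *ᵥ v a)) := by
  simp only [mulVec_sum, mulVec_smul, sum_dotProduct, dotProduct_sum, smul_dotProduct,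
    dotProduct_smul, smul_eq_mul]
  refine sum_congr rfl fun a _ => ?_
  rw [sum_eq_single a (fun b _ hba => by simp [h hba]) (by simp)]
  ring

namespace SimpleGraph

variable {V : Type*}

def IsMaximalConnectedSubset (G : SimpleGraph V) (P S : Set V) : Prop :=
  Maximal (fun T => T ⊆ P ∧ (G.induce T).Connected) S

variable {G : SimpleGraph V} {P S T : Set V} {i j : V}

lemma IsMaximalConnectedSubset.mem_of_adj (hS : G.IsMaximalConnectedSubset P S) (hi : i ∈ S)
    (hij : G.Adj i j) (hj : j ∈ P) : j ∈ S := by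
  have hconn : (G.induce (S ∪ {i, j})).Connected := induce_union_connected
    hS.prop.2.preconnected (G.induce_pair_connected_of_adj hij).preconnected ⟨i, hi, by simp⟩
  have hsub : S ∪ {i, j} ⊆ P :=
    Set.union_subset hS.prop.1 (Set.insert_subset (hS.prop.1 hi) (Set.singleton_subset_iff.2 hj))
  rw [hS.eq_of_subset ⟨hsub, hconn⟩ Set.subset_union_left]
  simp

lemma IsMaximalConnectedSubset.eq_of_mem (hS : G.IsMaximalConnectedSubset P S)
    (hT : G.IsMaximalConnectedSubset P T) (hiS : i ∈ S) (hiT : i ∈ T) : S = T := by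
  have hsub := Set.union_subset hS.prop.1 hT.prop.1
  have hconn := induce_union_connected hS.prop.2.preconnected hT.prop.2.preconnected ⟨i, hiS, hiT⟩
  exact (hS.eq_of_subset ⟨hsub, hconn⟩ Set.subset_union_left).trans
    (hT.eq_of_subset ⟨hsub, hconn⟩ Set.subset_union_right).symm

lemma IsMaximalConnectedSubset.not_adj (hS : G.IsMaximalConnectedSubset P S)
    (hT : G.IsMaximalConnectedSubset P T) (hST : S ≠ T) (hi : i ∈ S) (hj : j ∈ T) :
    ¬ G.Adj i j :=
  fun hij => hST (hS.eq_of_mem hT (hS.mem_of_adj hi hij (hT.prop.1 hj)) hj)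

lemma IsMaximalConnectedSubset.nonpos_of_adj {u : V → ℝ} (hP : {i | 0 < u i} ⊆ P)
    (hS : G.IsMaximalConnectedSubset P S) (hi : i ∈ S) (hij : G.Adj i j) (hj : j ∉ S) :
    u j ≤ 0 :=
  not_lt.1 fun hu => hj (hS.mem_of_adj hi hij (hP hu))

lemma IsMaximalConnectedSubset.neg_of_adj {u : V → ℝ}
    (hS : G.IsMaximalConnectedSubset {i | 0 ≤ u i} S) (hi : i ∈ S) (hij : G.Adj i j)
    (hj : j ∉ S) : u j < 0 :=
  not_le.1 fun hu => hj (hS.mem_of_adj hi hij hu)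

lemma pairwise_disjoint_of_isMaximalConnectedSubset {ι : Type*} {S : ι → Set V}
    (hS : ∀ a, G.IsMaximalConnectedSubset P (S a)) (hinj : S.Injective) :
    Pairwise fun a b => Disjoint (S a) (S b) :=
  fun a b hab => Set.disjoint_left.2 fun _ hia hib => hinj.ne hab ((hS a).eq_of_mem (hS b) hia hib)

lemma pairwise_not_adj_of_isMaximalConnectedSubset {ι : Type*} {S : ι → Set V}
    (hS : ∀ a, G.IsMaximalConnectedSubset P (S a)) (hinj : S.Injective) :
    Pairwise fun a b => ∀ i ∈ S a, ∀ j ∈ S b, ¬ G.Adj i j :=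
  fun a b hab _ hi _ hj => (hS a).not_adj (hS b) (hinj.ne hab) hi hj

lemma Connected.exists_adj_mem_notMem (hG : G.Connected) (hi : i ∈ S) (hj : j ∉ S) :
    ∃ a ∈ S, ∃ b ∉ S, G.Adj a b :=
  let ⟨d, _, hd, hd'⟩ := (hG.preconnected i j).some.exists_boundary_dart S hi hj
  ⟨_, hd, _, hd', d.adj⟩

end SimpleGraph

lemma IsPosStrongNodalDomain.isMaximalConnectedSubset {G : SimpleGraph (Fin n)}
    {u : Fin n → ℝ} {S : Set (Fin n)} (hS : IsPosStrongNodalDomain G u S) :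
    G.IsMaximalConnectedSubset {i | 0 < u i} S :=
  ⟨⟨hS.1, hS.2.1⟩, fun T hT hST => (hS.2.2 T hST hT.1 hT.2).le⟩

lemma IsPosWeakNodalDomain.isMaximalConnectedSubset {G : SimpleGraph (Fin n)}
    {u : Fin n → ℝ} {S : Set (Fin n)} (hS : IsPosWeakNodalDomain G u S) :
    G.IsMaximalConnectedSubset {i | 0 ≤ u i} S :=
  ⟨⟨hS.1, hS.2.2.1⟩, fun T hT hST => (hS.2.2.2 T hST hT.1 hT.2).le⟩

section Indicator

variable {V ι : Type*} {G : SimpleGraph V} {u : V → ℝ} {S : Set V} {i j : V}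

lemma indicator_dotProduct_indicator_of_disjoint [Fintype V] {T : Set V} (h : Disjoint S T)
    (v : V → ℝ) : S.indicator u ⬝ᵥ T.indicator v = 0 :=
  sum_eq_zero fun i _ => by
    by_cases hi : i ∈ S
    · rw [Set.indicator_of_notMem (h.notMem_of_mem_left hi), mul_zero]
    · rw [Set.indicator_of_notMem hi, zero_mul]

lemma compl_indicator_apply_nonpos_of_adj (h : ∀ j, G.Adj i j → j ∉ S → u j ≤ 0)
    (hij : G.Adj i j) : Sᶜ.indicator u j ≤ 0 := by
  by_cases hjS : j ∈ S
  · simp [hjS]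
  · rw [Set.indicator_of_mem (Set.mem_compl hjS)]
    exact h j hij hjS

lemma sum_smul_indicator_apply_of_mem [Fintype ι] {S : ι → Set V}
    (hdisj : Pairwise fun a b => Disjoint (S a) (S b)) (c : ι → ℝ) {a : ι} (hi : i ∈ S a) :
    (∑ b, c b • (S b).indicator u) i = c a * u i := by
  rw [Finset.sum_apply, sum_eq_single a (fun b _ hba => ?_) (by simp)]
  · simp [Set.indicator_of_mem hi]
  · simp [Set.indicator_of_notMem ((hdisj hba.symm).notMem_of_mem_left hi)]

variable [Fintype V] [DecidableRel G.Adj]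

lemma adjMatrix_mulVec_indicator_apply_eq_zero (h : ∀ j ∈ S, ¬ G.Adj i j) :
    (G.adjMatrix ℝ *ᵥ S.indicator u) i = 0 := by
  rw [SimpleGraph.adjMatrix_mulVec_apply]
  exact sum_eq_zero fun j hj =>
    Set.indicator_of_notMem (fun hjS => h j hjS ((G.mem_neighborFinset i j).1 hj)) u

lemma indicator_dotProduct_adjMatrix_mulVec_indicator_eq_zero {T : Set V}
    (h : ∀ i ∈ S, ∀ j ∈ T, ¬ G.Adj i j) (v : V → ℝ) :
    S.indicator u ⬝ᵥ (G.adjMatrix ℝ *ᵥ T.indicator v) = 0 :=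
  sum_eq_zero fun i _ => by
    by_cases hi : i ∈ S
    · rw [adjMatrix_mulVec_indicator_apply_eq_zero (h i hi), mul_zero]
    · rw [Set.indicator_of_notMem hi, zero_mul]

lemma adjMatrix_mulVec_compl_indicator_apply_nonpos (h : ∀ j, G.Adj i j → j ∉ S → u j ≤ 0) :
    (G.adjMatrix ℝ *ᵥ Sᶜ.indicator u) i ≤ 0 := by
  rw [SimpleGraph.adjMatrix_mulVec_apply]
  exact sum_nonpos fun j hj =>
    compl_indicator_apply_nonpos_of_adj h ((G.mem_neighborFinset i j).1 hj)

lemma adjMatrix_mulVec_compl_indicator_apply_neg [DecidableEq V]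
    (h : ∀ j, G.Adj i j → j ∉ S → u j ≤ 0) (hij : G.Adj i j) (hjS : j ∉ S) (hj : u j < 0) :
    (G.adjMatrix ℝ *ᵥ Sᶜ.indicator u) i < 0 := by
  rw [SimpleGraph.adjMatrix_mulVec_apply, ← add_sum_erase _ _ ((G.mem_neighborFinset i j).2 hij),
    Set.indicator_of_mem (Set.mem_compl hjS)]
  exact add_neg_of_neg_of_nonpos hj (sum_nonpos fun k hk =>
    compl_indicator_apply_nonpos_of_adj h ((G.mem_neighborFinset i k).1 (mem_of_mem_erase hk)))

lemma indicator_mul_adjMatrix_mulVec_compl_indicator_apply_nonpos (hnonneg : ∀ i ∈ S, 0 ≤ u i)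
    (hclosed : ∀ i ∈ S, ∀ j, G.Adj i j → j ∉ S → u j ≤ 0) (i : V) :
    S.indicator u i * (G.adjMatrix ℝ *ᵥ Sᶜ.indicator u) i ≤ 0 := by
  by_cases hi : i ∈ S
  · rw [Set.indicator_of_mem hi]
    exact mul_nonpos_of_nonneg_of_nonpos (hnonneg i hi)
      (adjMatrix_mulVec_compl_indicator_apply_nonpos (hclosed i hi))
  · rw [Set.indicator_of_notMem hi, zero_mul]

lemma indicator_dotProduct_adjMatrix_mulVec_compl_indicator_nonpos (hnonneg : ∀ i ∈ S, 0 ≤ u i)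
    (hclosed : ∀ i ∈ S, ∀ j, G.Adj i j → j ∉ S → u j ≤ 0) :
    S.indicator u ⬝ᵥ (G.adjMatrix ℝ *ᵥ Sᶜ.indicator u) ≤ 0 :=
  sum_nonpos fun i _ =>
    indicator_mul_adjMatrix_mulVec_compl_indicator_apply_nonpos hnonneg hclosed i

variable [Fintype ι] {S : ι → Set V} {a : ι}

lemma adjMatrix_mulVec_sum_smul_indicator_apply_of_mem
    (hnadj : Pairwise fun a b => ∀ i ∈ S a, ∀ j ∈ S b, ¬ G.Adj i j) (c : ι → ℝ) (hi : i ∈ S a) :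
    (G.adjMatrix ℝ *ᵥ ∑ b, c b • (S b).indicator u) i =
      c a * (G.adjMatrix ℝ *ᵥ (S a).indicator u) i := by
  rw [mulVec_sum, Finset.sum_apply, sum_eq_single a (fun b _ hba => ?_) (by simp)]
  · rw [mulVec_smul, Pi.smul_apply, smul_eq_mul]
  · rw [mulVec_smul, Pi.smul_apply,
      adjMatrix_mulVec_indicator_apply_eq_zero fun j hj => hnadj hba.symm i hi j hj, smul_zero]

lemma rayleighExcess_sum_smul_indicator [DecidableEq V]
    (hdisj : Pairwise fun a b => Disjoint (S a) (S b))
    (hnadj : Pairwise fun a b => ∀ i ∈ S a, ∀ j ∈ S b, ¬ G.Adj i j) (lam : ℝ) (c : ι → ℝ) :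
    rayleighExcess (G.adjMatrix ℝ) lam (∑ a, c a • (S a).indicator u) =
      ∑ a, c a ^ 2 * rayleighExcess (G.adjMatrix ℝ) lam ((S a).indicator u) := by
  have hA := sum_smul_dotProduct_mulVec_sum_smul (G.adjMatrix ℝ) c (fun a => (S a).indicator u)
    fun a b hab => indicator_dotProduct_adjMatrix_mulVec_indicator_eq_zero (hnadj hab) u
  have h1 := sum_smul_dotProduct_mulVec_sum_smul 1 c (fun a => (S a).indicator u)
    fun a b hab => by simpa using indicator_dotProduct_indicator_of_disjoint (hdisj hab) u
  simp only [one_mulVec] at h1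
  rw [rayleighExcess, hA, h1, mul_sum, ← sum_sub_distrib]
  exact sum_congr rfl fun a _ => by rw [rayleighExcess]; ring

end Indicator

section Modularity

variable {G : SimpleGraph (Fin n)} [DecidableRel G.Adj] {u : Fin n → ℝ} {lam : ℝ}

lemma modM_mulVec (x : Fin n → ℝ) :
    modM G *ᵥ x = G.adjMatrix ℝ *ᵥ x - ((volG G)⁻¹ * (degR G ⬝ᵥ x)) • degR G := by
  rw [modM, sub_mulVec, smul_mulVec, vecMulVec_mulVec, op_smul_eq_smul, smul_smul]

lemma modM_mulVec_of_dotProduct_eq_zero {x : Fin n → ℝ} (hx : degR G ⬝ᵥ x = 0) :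
    modM G *ᵥ x = G.adjMatrix ℝ *ᵥ x := by
  rw [modM_mulVec, hx, mul_zero, zero_smul, sub_zero]

lemma volG_nonneg : 0 ≤ volG G :=
  sum_nonneg fun i _ => Nat.cast_nonneg (G.degree i)

lemma adjMatrix_mulVec_eq_of_modM_mulVec_eq (heig : modM G *ᵥ u = lam • u) :
    G.adjMatrix ℝ *ᵥ u = lam • u + ((volG G)⁻¹ * (degR G ⬝ᵥ u)) • degR G := by
  rw [← heig, modM_mulVec, sub_add_cancel]

lemma adjMatrix_mulVec_apply_nonneg_of_eq_zero (heig : modM G *ᵥ u = lam • u)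
    (hor : 0 ≤ degR G ⬝ᵥ u) {i : Fin n} (hi : u i = 0) :
    0 ≤ (G.adjMatrix ℝ *ᵥ u) i := by
  rw [adjMatrix_mulVec_eq_of_modM_mulVec_eq heig]
  simp only [Pi.add_apply, Pi.smul_apply, smul_eq_mul, hi, mul_zero, zero_add]
  exact mul_nonneg (mul_nonneg (inv_nonneg.2 volG_nonneg) hor) (Nat.cast_nonneg _)

lemma adjMatrix_mulVec_indicator_apply_pos (heig : modM G *ᵥ u = lam • u)
    (hor : 0 ≤ degR G ⬝ᵥ u) {S : Set (Fin n)} {i j : Fin n}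
    (hclosed : ∀ j, G.Adj i j → j ∉ S → u j ≤ 0) (hui : u i = 0) (hij : G.Adj i j)
    (hj : j ∉ S) (hju : u j < 0) :
    0 < (G.adjMatrix ℝ *ᵥ S.indicator u) i := by
  have hout := adjMatrix_mulVec_compl_indicator_apply_neg hclosed hij hj hju
  have hu := adjMatrix_mulVec_apply_nonneg_of_eq_zero heig hor hui
  rw [← S.indicator_self_add_compl u, mulVec_add, Pi.add_apply] at hu
  linarith

/-- The gap is the degree term `(dᵀu) (dᵀu_S) / vol G ≥ 0`. -/
lemma neg_indicator_dotProduct_adjMatrix_mulVec_compl_indicator_le_rayleighExcess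
    (heig : modM G *ᵥ u = lam • u) (hor : 0 ≤ degR G ⬝ᵥ u) {S : Set (Fin n)}
    (hnonneg : ∀ i ∈ S, 0 ≤ u i) :
    -(S.indicator u ⬝ᵥ (G.adjMatrix ℝ *ᵥ Sᶜ.indicator u)) ≤
      rayleighExcess (G.adjMatrix ℝ) lam (S.indicator u) := by
  have hsplit : S.indicator u ⬝ᵥ (G.adjMatrix ℝ *ᵥ u) =
      S.indicator u ⬝ᵥ (G.adjMatrix ℝ *ᵥ S.indicator u) +
        S.indicator u ⬝ᵥ (G.adjMatrix ℝ *ᵥ Sᶜ.indicator u) := by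
    rw [← dotProduct_add, ← mulVec_add, S.indicator_self_add_compl u]
  have hself : S.indicator u ⬝ᵥ u = S.indicator u ⬝ᵥ S.indicator u := by
    conv_lhs => arg 2; rw [← S.indicator_self_add_compl u]
    rw [dotProduct_add, indicator_dotProduct_indicator_of_disjoint disjoint_compl_right, add_zero]
  have hdeg : 0 ≤ (volG G)⁻¹ * (degR G ⬝ᵥ u) * (S.indicator u ⬝ᵥ degR G) :=
    mul_nonneg (mul_nonneg (inv_nonneg.2 volG_nonneg) hor) (dotProduct_nonneg_of_nonneg
      (Set.indicator_nonneg hnonneg) fun i => Nat.cast_nonneg (G.degree i))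
  rw [adjMatrix_mulVec_eq_of_modM_mulVec_eq heig, dotProduct_add, dotProduct_smul,
    dotProduct_smul, hself, smul_eq_mul, smul_eq_mul] at hsplit
  rw [rayleighExcess]
  linarith

lemma eq_zero_of_rayleighExcess_indicator_eq_zero (heig : modM G *ᵥ u = lam • u)
    (hor : 0 ≤ degR G ⬝ᵥ u) {S : Set (Fin n)} (hnonneg : ∀ i ∈ S, 0 ≤ u i)
    (hclosed : ∀ i ∈ S, ∀ j, G.Adj i j → j ∉ S → u j ≤ 0)
    (hexcess : rayleighExcess (G.adjMatrix ℝ) lam (S.indicator u) = 0)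
    {i j : Fin n} (hi : i ∈ S) (hij : G.Adj i j) (hj : j ∉ S) (hju : u j < 0) : u i = 0 := by
  have hgap :=
    neg_indicator_dotProduct_adjMatrix_mulVec_compl_indicator_le_rayleighExcess heig hor hnonneg
  have hzero : S.indicator u ⬝ᵥ (G.adjMatrix ℝ *ᵥ Sᶜ.indicator u) = 0 :=
    le_antisymm (indicator_dotProduct_adjMatrix_mulVec_compl_indicator_nonpos hnonneg hclosed)
      (by linarith)
  have hi0 := (sum_eq_zero_iff_of_nonpos fun k _ =>
    indicator_mul_adjMatrix_mulVec_compl_indicator_apply_nonpos hnonneg hclosed k).1 hzero i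
      (mem_univ i)
  rw [Set.indicator_of_mem hi] at hi0
  exact (mul_eq_zero.1 hi0).resolve_right
    (adjMatrix_mulVec_compl_indicator_apply_neg (hclosed i hi) hij hj hju).ne

lemma SimpleGraph.IsMaximalConnectedSubset.rayleighExcess_indicator_nonneg
    (heig : modM G *ᵥ u = lam • u) (hor : 0 ≤ degR G ⬝ᵥ u) {P S : Set (Fin n)}
    (hP : {i | 0 < u i} ⊆ P) (hP' : P ⊆ {i | 0 ≤ u i}) (hS : G.IsMaximalConnectedSubset P S) :
    0 ≤ rayleighExcess (G.adjMatrix ℝ) lam (S.indicator u) :=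
  have hnonneg (i) (hi : i ∈ S) : 0 ≤ u i := hP' (hS.prop.1 hi)
  (neg_nonneg.2 (indicator_dotProduct_adjMatrix_mulVec_compl_indicator_nonpos hnonneg
    fun _ hi _ hij hj => hS.nonpos_of_adj hP hi hij hj)).trans
    (neg_indicator_dotProduct_adjMatrix_mulVec_compl_indicator_le_rayleighExcess heig hor hnonneg)

variable {ι : Type*} [Fintype ι] {P : Set (Fin n)} {S : ι → Set (Fin n)}

lemma rayleighExcess_sum_smul_indicator_nonneg (heig : modM G *ᵥ u = lam • u)
    (hor : 0 ≤ degR G ⬝ᵥ u) (hP : {i | 0 < u i} ⊆ P) (hP' : P ⊆ {i | 0 ≤ u i})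
    (hS : ∀ a, G.IsMaximalConnectedSubset P (S a)) (hinj : S.Injective) (c : ι → ℝ) :
    0 ≤ rayleighExcess (G.adjMatrix ℝ) lam (∑ a, c a • (S a).indicator u) := by
  rw [rayleighExcess_sum_smul_indicator
    (SimpleGraph.pairwise_disjoint_of_isMaximalConnectedSubset hS hinj)
    (SimpleGraph.pairwise_not_adj_of_isMaximalConnectedSubset hS hinj)]
  exact sum_nonneg fun a _ =>
    mul_nonneg (sq_nonneg _) ((hS a).rayleighExcess_indicator_nonneg heig hor hP hP')

lemma rayleighExcess_indicator_eq_zero_of_sum_smul_nonpos (heig : modM G *ᵥ u = lam • u)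
    (hor : 0 ≤ degR G ⬝ᵥ u) (hP : {i | 0 < u i} ⊆ P) (hP' : P ⊆ {i | 0 ≤ u i})
    (hS : ∀ a, G.IsMaximalConnectedSubset P (S a)) (hinj : S.Injective) {c : ι → ℝ}
    (hle : rayleighExcess (G.adjMatrix ℝ) lam (∑ a, c a • (S a).indicator u) ≤ 0)
    {a : ι} (ha : c a ≠ 0) : rayleighExcess (G.adjMatrix ℝ) lam ((S a).indicator u) = 0 := by
  have hterm (b : ι) := mul_nonneg (sq_nonneg (c b))
    ((hS b).rayleighExcess_indicator_nonneg heig hor hP hP')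
  have hsum := rayleighExcess_sum_smul_indicator (u := u)
    (SimpleGraph.pairwise_disjoint_of_isMaximalConnectedSubset hS hinj)
    (SimpleGraph.pairwise_not_adj_of_isMaximalConnectedSubset hS hinj) lam c
  have hzero := (sum_eq_zero_iff_of_nonneg fun b _ => hterm b).1
    (le_antisymm (by linarith) (sum_nonneg fun b _ => hterm b)) a (mem_univ a)
  exact (mul_eq_zero.1 hzero).resolve_left (pow_ne_zero 2 ha)

lemma nonneg_of_adj_of_mulVec_sum_smul_indicator_eq_smul (heig : modM G *ᵥ u = lam • u)
    (hor : 0 ≤ degR G ⬝ᵥ u) (hS : ∀ a, G.IsMaximalConnectedSubset {i | 0 ≤ u i} (S a))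
    (hinj : S.Injective) {c : ι → ℝ}
    (hAx : G.adjMatrix ℝ *ᵥ ∑ a, c a • (S a).indicator u = lam • ∑ a, c a • (S a).indicator u)
    {a : ι} (ha : c a ≠ 0)
    (hexcess : rayleighExcess (G.adjMatrix ℝ) lam ((S a).indicator u) = 0)
    {i j : Fin n} (hi : i ∈ S a) (hij : G.Adj i j) : 0 ≤ u j := by
  by_contra! hju
  have hj : j ∉ S a := fun hj => hju.not_ge ((hS a).prop.1 hj)
  have hclosed (i) (hi : i ∈ S a) (k) (hik : G.Adj i k) (hk : k ∉ S a) : u k ≤ 0 :=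
    ((hS a).neg_of_adj hi hik hk).le
  have hui := eq_zero_of_rayleighExcess_indicator_eq_zero heig hor
    (fun _ hi => (hS a).prop.1 hi) hclosed hexcess hi hij hj hju
  have hin := congrFun hAx i
  rw [adjMatrix_mulVec_sum_smul_indicator_apply_of_mem
      (SimpleGraph.pairwise_not_adj_of_isMaximalConnectedSubset hS hinj) c hi, Pi.smul_apply,
    sum_smul_indicator_apply_of_mem
      (SimpleGraph.pairwise_disjoint_of_isMaximalConnectedSubset hS hinj) c hi,
    hui, mul_zero, smul_zero] at hin
  exact mul_ne_zero ha (adjMatrix_mulVec_indicator_apply_pos heig hor (hclosed i hi) hui hij hj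
    hju).ne' hin

theorem ncard_setOf_isPosStrongNodalDomain_le (hM : (modM G).IsHermitian)
    (heig : modM G *ᵥ u = lam • u) (hor : 0 ≤ degR G ⬝ᵥ u) :
    {S : Set (Fin n) | IsPosStrongNodalDomain G u S}.ncard ≤
      (Finset.univ.filter (fun i => lam ≤ hM.eigenvalues i)).card + 1 := by
  classical
  set D := {S : Set (Fin n) | IsPosStrongNodalDomain G u S}
  have hD (S : D) := S.2.isMaximalConnectedSubset
  by_contra! hcard
  obtain ⟨c, hc, hdx, hwx⟩ := exists_ne_zero_dotProduct_sum_smul_eq_zero (degR G)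
    (fun i => ⇑(hM.eigenvectorBasis i)) (univ.filter fun i => lam ≤ hM.eigenvalues i)
    (fun S : D => S.1.indicator u) (by rwa [← Nat.card_eq_fintype_card, Nat.card_coe_set_eq])
  obtain ⟨S, hS⟩ := Function.ne_iff.1 hc
  obtain ⟨⟨i, hi⟩⟩ := S.2.2.1.nonempty
  have hx : ∑ T : D, c T • T.1.indicator u ≠ 0 := fun h => mul_ne_zero hS (S.2.1 hi).ne' <| by
    rw [← sum_smul_indicator_apply_of_mem (SimpleGraph.pairwise_disjoint_of_isMaximalConnectedSubset
      hD Subtype.val_injective) c hi, h, Pi.zero_apply]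
  have hlt := hM.dotProduct_mulVec_lt_of_orthogonal hx
    fun i hi => hwx i (mem_filter.2 ⟨mem_univ i, hi⟩)
  rw [modM_mulVec_of_dotProduct_eq_zero hdx] at hlt
  exact (rayleighExcess_sum_smul_indicator_nonneg heig hor subset_rfl
    (Set.ofPred_subset_ofPred.2 fun _ => le_of_lt) hD Subtype.val_injective c).not_gt
    (sub_neg.2 hlt)

theorem ncard_setOf_isPosWeakNodalDomain_le (hG : G.Connected) (hM : (modM G).IsHermitian)
    (heig : modM G *ᵥ u = lam • u) (hor : 0 ≤ degR G ⬝ᵥ u) (hneg : ∃ j, u j < 0) :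
    {S : Set (Fin n) | IsPosWeakNodalDomain G u S}.ncard ≤
      (Finset.univ.filter (fun i => lam < hM.eigenvalues i)).card + 1 := by
  classical
  set D := {S : Set (Fin n) | IsPosWeakNodalDomain G u S}
  have hD (S : D) := S.2.isMaximalConnectedSubset
  have hP : {i | 0 < u i} ⊆ {i | 0 ≤ u i} := Set.ofPred_subset_ofPred.2 fun _ => le_of_lt
  by_contra! hcard
  obtain ⟨c, hc, hdx, hwx⟩ := exists_ne_zero_dotProduct_sum_smul_eq_zero (degR G)
    (fun i => ⇑(hM.eigenvectorBasis i)) (univ.filter fun i => lam < hM.eigenvalues i)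
    (fun S : D => S.1.indicator u) (by rwa [← Nat.card_eq_fintype_card, Nat.card_coe_set_eq])
  set x := ∑ T : D, c T • T.1.indicator u
  obtain ⟨S, hS⟩ := Function.ne_iff.1 hc
  have hwx' (i) (hi : lam < hM.eigenvalues i) : ⇑(hM.eigenvectorBasis i) ⬝ᵥ x = 0 :=
    hwx i (mem_filter.2 ⟨mem_univ i, hi⟩)
  have hle := hM.dotProduct_mulVec_le_of_orthogonal hwx'
  rw [modM_mulVec_of_dotProduct_eq_zero hdx] at hle
  have hge := rayleighExcess_sum_smul_indicator_nonneg heig hor hP subset_rfl hD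
    Subtype.val_injective c
  have hAx : G.adjMatrix ℝ *ᵥ x = lam • x := by
    rw [← modM_mulVec_of_dotProduct_eq_zero hdx]
    refine hM.mulVec_eq_smul_of_orthogonal_of_dotProduct_mulVec_eq hwx' ?_
    rw [modM_mulVec_of_dotProduct_eq_zero hdx]
    exact le_antisymm hle (sub_nonneg.1 hge)
  have hexcess := rayleighExcess_indicator_eq_zero_of_sum_smul_nonpos heig hor hP subset_rfl hD
    Subtype.val_injective (sub_nonpos.2 hle) hS
  obtain ⟨j0, hj0⟩ := hneg
  obtain ⟨⟨i0, hi0⟩⟩ := S.2.2.2.1.nonempty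
  obtain ⟨i, hi, j, hj, hij⟩ := hG.exists_adj_mem_notMem hi0 fun h => (S.2.1 h).not_gt hj0
  exact hj ((hD S).mem_of_adj hi hij (nonneg_of_adj_of_mulVec_sum_smul_indicator_eq_smul heig hor
    hD Subtype.val_injective hAx hS hexcess hi hij))

end Modularity

theorem modularity_nodal_domain_theorem_general (G : SimpleGraph (Fin n))
    [DecidableRel G.Adj] (hG : G.Connected) (hM : (modM G).IsHermitian)
    (lam : ℝ) (u : Fin n → ℝ)
    (heig : modM G *ᵥ u = lam • u)
    (hor : 0 ≤ degR G ⬝ᵥ u)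
    (hneg : ∃ j, u j < 0) :
    {S : Set (Fin n) | IsPosStrongNodalDomain G u S}.ncard ≤
      (Finset.univ.filter (fun i => lam ≤ hM.eigenvalues i)).card + 1 ∧
    {S : Set (Fin n) | IsPosWeakNodalDomain G u S}.ncard ≤
      (Finset.univ.filter (fun i => lam < hM.eigenvalues i)).card + 1 :=
  ⟨ncard_setOf_isPosStrongNodalDomain_le hM heig hor,
    ncard_setOf_isPosWeakNodalDomain_le hG hM heig hor hneg⟩

/-- Modularity nodal domain theorem: if `u` is an eigenvector of the modularity
matrix `M` for the eigenvalue `λ`, oriented so that `dᵀu ≥ 0`, and `u` has entries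
of opposite signs, then `u` induces at most `ℓ+1` positive strong nodal domains and
at most `ℓ'+1` positive weak nodal domains, where `ℓ` (resp. `ℓ'`) is the number of
eigenvalues of `M` that are `≥ λ` (resp. `> λ`), with multiplicity. -/
theorem modularity_nodal_domain_theorem (G : SimpleGraph (Fin n))
    [DecidableRel G.Adj] (hG : G.Connected) (hM : (modM G).IsHermitian)
    (lam : ℝ) (u : Fin n → ℝ) (hu : u ≠ 0)
    (heig : modM G *ᵥ u = lam • u)
    (hor : 0 ≤ degR G ⬝ᵥ u)
    (hpos : ∃ i, 0 < u i) (hneg : ∃ j, u j < 0) :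
    {S : Set (Fin n) | IsPosStrongNodalDomain G u S}.ncard ≤
      (Finset.univ.filter (fun i => lam ≤ hM.eigenvalues i)).card + 1 ∧
    {S : Set (Fin n) | IsPosWeakNodalDomain G u S}.ncard ≤
      (Finset.univ.filter (fun i => lam < hM.eigenvalues i)).card + 1 :=
  modularity_nodal_domain_theorem_general G hG hM lam u heig hor hneg
end
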